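/- Let V be a finite set and let (g_k)_{k≥1} be a sequence of reflexive, strongly connected relations on V. Then for every k ≥ 1, either the cumulant g₁ ∘ ⋯ ∘ g_k is the complete relation V × V, or the inclusion g₁ ∘ ⋯ ∘ g_k ⊊ g₁ ∘ ⋯ ∘ g_k ∘ g_{k+1} is strict. In other words, the cumulant strictly grows at every step until it becomes complete. -/

import Mathlib

/-!
If appending `g (k+1)` adds no new pair, the cumulant is closed under right composition with
`g (k+1)`, hence under its reflexive-transitive closure, which is complete by strong connectivity.
Since the cumulant is reflexive, it is then complete itself.
-/

/-- Composition of a list of relations; the empty composition is equality. -/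
def compList {V : Type*} : List (V → V → Prop) → (V → V → Prop)
  | [] => Eq
  | g :: l => Relation.Comp g (compList l)

/-- The cumulant g₁ ∘ ⋯ ∘ g_k of the sequence (g_k): here `g i` is g_{i+1}. -/
def cumulant {V : Type*} (g : ℕ → (V → V → Prop)) (k : ℕ) : V → V → Prop :=
  compList (List.ofFn fun i : Fin k => g i)

namespace Relation

variable {α : Type*} {r s : α → α → Prop}

theorem comp_of_refl_right (hs : ∀ x, s x x) {a b : α} (h : r a b) : Comp r s a b :=
  ⟨b, h, hs b⟩

theorem of_reflTransGen_of_comp_le (hclosed : ∀ a b, Comp r s a b → r a b) {a b c : α}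
    (hab : r a b) (hbc : ReflTransGen s b c) : r a c := by
  induction hbc with
  | refl => exact hab
  | tail _ hstep ih => exact hclosed _ _ ⟨_, ih, hstep⟩

theorem forall_of_comp_le (hr : ∀ x, r x x) (hs : ∀ x y, ReflTransGen s x y)
    (hclosed : ∀ a b, Comp r s a b → r a b) (x y : α) : r x y :=
  of_reflTransGen_of_comp_le hclosed (hr x) (hs x y)

end Relation

section

variable {V : Type*}

theorem compList_append (l₁ l₂ : List (V → V → Prop)) :
    compList (l₁ ++ l₂) = Relation.Comp (compList l₁) (compList l₂) := by
  induction l₁ with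
  | nil => exact Relation.eq_comp.symm
  | cons a l ih => simp only [List.cons_append, compList, ih, Relation.comp_assoc]

theorem compList_singleton (h : V → V → Prop) : compList [h] = h :=
  Relation.comp_eq

theorem compList_refl {l : List (V → V → Prop)} (hl : ∀ h ∈ l, ∀ x, h x x) (x : V) :
    compList l x x := by
  induction l with
  | nil => rfl
  | cons a l ih => exact ⟨x, hl a List.mem_cons_self x, ih fun h hh => hl h (.tail _ hh)⟩

theorem cumulant_succ (g : ℕ → (V → V → Prop)) (k : ℕ) :
    cumulant g (k + 1) = Relation.Comp (cumulant g k) (g k) := by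
  rw [cumulant, List.ofFn_succ', List.concat_eq_append, compList_append, compList_singleton]
  simp only [Fin.val_castSucc, Fin.val_last]
  rfl

theorem cumulant_refl {g : ℕ → (V → V → Prop)} (hrefl : ∀ i x, g i x x) (k : ℕ) (x : V) :
    cumulant g k x x :=
  compList_refl (by simpa only [List.mem_ofFn, forall_exists_index, forall_apply_eq_imp_iff]
    using fun i : Fin k => hrefl i) x

end

theorem cumulant_grows_until_complete_general {V : Type*}
    (g : ℕ → (V → V → Prop))
    (hrefl : ∀ i x, g i x x)
    (hconn : ∀ i x y, Relation.ReflTransGen (g i) x y) :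
    ∀ k : ℕ, 1 ≤ k →
      (∀ x y, cumulant g k x y) ∨
      ((∀ x y, cumulant g k x y → cumulant g (k + 1) x y) ∧
        ∃ x y, cumulant g (k + 1) x y ∧ ¬ cumulant g k x y) := by
  intro k _
  refine or_iff_not_imp_left.mpr fun hincomplete => ⟨fun x y hxy => ?_, ?_⟩
  · rw [cumulant_succ]
    exact Relation.comp_of_refl_right (hrefl k) hxy
  · by_contra! hclosed
    rw [cumulant_succ] at hclosed
    exact hincomplete (Relation.forall_of_comp_le (cumulant_refl hrefl k) (hconn k) hclosed)

/-- For a sequence of reflexive strongly connected relations on a finite set V,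
at every step k ≥ 1 the cumulant g₁ ∘ ⋯ ∘ g_k is either already the complete
relation V × V, or it is strictly contained in g₁ ∘ ⋯ ∘ g_{k+1}. -/
theorem cumulant_grows_until_complete {V : Type*} [Fintype V] [Nonempty V]
    (g : ℕ → (V → V → Prop))
    (hrefl : ∀ i x, g i x x)
    (hconn : ∀ i x y, Relation.ReflTransGen (g i) x y) :
    ∀ k : ℕ, 1 ≤ k →
      (∀ x y, cumulant g k x y) ∨
      ((∀ x y, cumulant g k x y → cumulant g (k + 1) x y) ∧
        ∃ x y, cumulant g (k + 1) x y ∧ ¬ cumulant g k x y) :=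
  cumulant_grows_until_complete_general g hrefl hconn
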